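/- Let G be a group, ℋ a set of subgroups of G, and F = F⟨ℋ⟩ the family generated by ℋ. If G is amenable relative to ℋ, then for every normed ℝG-module W, every n ≥ 1, and every bounded G-equivariant function f : (G/F)^{n+1} → W^# with δⁿf = 0, there exists a bounded G-equivariant function b : (G/F)^n → W^# with δ^{n−1}b = f. That is, H^n_{F⟨ℋ⟩,b}(G;W^#) = 0 for every dual normed ℝG-module W^# and all n ≥ 1. -/

import Mathlib

open scoped BigOperators

universe u v w

namespace RelBdd

variable {G : Type u} [Group G]

/-- `F` is a family of subgroups of `G`: nonempty, closed under conjugation and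
closed under taking subgroups. -/
def IsFamily (F : Set (Subgroup G)) : Prop :=
  F.Nonempty ∧
    (∀ H ∈ F, ∀ g : G, Subgroup.map ((MulAut.conj g).toMonoidHom) H ∈ F) ∧
    ∀ H ∈ F, ∀ K : Subgroup G, K ≤ H → K ∈ F

/-- The `G`-set `G/F = ⨿_{H ∈ F} G/H`. -/
abbrev Cos (G : Type u) [Group G] (F : Set (Subgroup G)) : Type u :=
  Σ H : F, G ⧸ (H : Subgroup G)

instance (F : Set (Subgroup G)) : SMul G (Cos G F) :=
  ⟨fun g x => ⟨x.1, g • x.2⟩⟩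

instance (F : Set (Subgroup G)) : MulAction G (Cos G F) where
  one_smul := by
    rintro ⟨H, q⟩
    show (⟨H, (1 : G) • q⟩ : Cos G F) = ⟨H, q⟩
    rw [one_smul]
  mul_smul g h := by
    rintro ⟨H, q⟩
    show (⟨H, (g * h) • q⟩ : Cos G F) = ⟨H, g • h • q⟩
    rw [mul_smul]

/-- A function into a normed space is bounded. -/
def Bdd {α : Type*} {V : Type*} [Norm V] (f : α → V) : Prop :=
  ∃ C : ℝ, ∀ x, ‖f x‖ ≤ C

/-- The simplicial coboundary operator on `V`-valued cochains on a set `S`. -/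
def delta {S : Type*} {V : Type*} [AddCommGroup V] [Module ℝ V] (n : ℕ)
    (f : (Fin (n + 1) → S) → V) : (Fin (n + 2) → S) → V :=
  fun x => ∑ i : Fin (n + 2), ((-1 : ℝ) ^ (i : ℕ)) • f (fun j => x (i.succAbove j))

/-- `ℓ∞(S)`: the space of bounded real valued functions on `S`. -/
def Linf (S : Type v) : Submodule ℝ (S → ℝ) where
  carrier := {f | ∃ C : ℝ, ∀ s, |f s| ≤ C}
  add_mem' := by
    rintro f g ⟨C, hC⟩ ⟨D, hD⟩
    exact ⟨C + D, fun s => (abs_add_le _ _).trans (add_le_add (hC s) (hD s))⟩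
  zero_mem' := ⟨0, fun s => by simp⟩
  smul_mem' := by
    rintro r f ⟨C, hC⟩
    refine ⟨|r| * C, fun s => ?_⟩
    show |r * f s| ≤ |r| * C
    rw [abs_mul]
    exact mul_le_mul_of_nonneg_left (hC s) (abs_nonneg r)

/-- The constant function `r` as an element of `ℓ∞(S)`. -/
def constLinf (S : Type v) (r : ℝ) : Linf S :=
  ⟨fun _ => r, ⟨|r|, fun _ => le_rfl⟩⟩

/-- Precomposition with a map `φ : S → S` as a linear endomorphism of `ℓ∞(S)`. -/
def compL {S : Type v} (φ : S → S) : Linf S →ₗ[ℝ] Linf S where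
  toFun f := ⟨fun s => (f : S → ℝ) (φ s), by
    obtain ⟨C, hC⟩ := f.2
    exact ⟨C, fun s => hC (φ s)⟩⟩
  map_add' f g := by ext s; rfl
  map_smul' r f := by ext s; rfl

/-- There exists a `K`-invariant mean on the `K`-set `S`. -/
def InvariantMean (K : Type u) (S : Type v) [Group K] [MulAction K S] : Prop :=
  ∃ m : Linf S →ₗ[ℝ] ℝ,
    m (constLinf S 1) = 1 ∧
    (∀ f : Linf S, (∀ s, 0 ≤ (f : S → ℝ) s) → 0 ≤ m f) ∧
    ∀ (g : K) (f : Linf S), m (compL (fun s => g⁻¹ • s) f) = m f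

/-- The restriction `F|_H = {L ∩ H : L ∈ F}` of a collection of subgroups of `G` to
a collection of subgroups of `H`. -/
def restrictedFamily (F : Set (Subgroup G)) (H : Subgroup G) : Set (Subgroup H) :=
  {K | ∃ L ∈ F, K = L.subgroupOf H}

/-- `K` is amenable relative to the collection `𝒦` of its subgroups: the `K`-set
`⨿_{L ∈ 𝒦} K/L` admits a `K`-invariant mean. -/
def RelativelyAmenable (K : Type u) [Group K] (𝒦 : Set (Subgroup K)) : Prop :=
  InvariantMean K (Cos K 𝒦)

/-- The family generated by a set `ℋ` of subgroups: all subgroups of conjugates of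
members of `ℋ`, together with the trivial subgroup. -/
def famGen (ℋ : Set (Subgroup G)) : Set (Subgroup G) :=
  {K | K = ⊥ ∨ ∃ H ∈ ℋ, ∃ g : G, ∀ x ∈ K, g⁻¹ * x * g ∈ H}

/-- The left multiplication action of `g ∈ G` on a normed `ℝG`-module `W`, as a
continuous linear map. -/
def smulCLM {W : Type w} [NormedAddCommGroup W] [NormedSpace ℝ W] [DistribMulAction G W]
    [SMulCommClass G ℝ W] (hW : ∀ (g : G) (w : W), ‖g • w‖ = ‖w‖) (g : G) : W →L[ℝ] W :=
  LinearMap.mkContinuous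
    { toFun := fun w => g • w
      map_add' := fun a b => smul_add g a b
      map_smul' := fun r w => smul_comm g r w }
    1 (fun w => by simp [hW])

/-! Coning off at a point `a` is a contracting homotopy of the cochain complex:
`δ (cone a f) + cone a (δ f) = f`, so every cocycle `f` is the coboundary of `cone a f`, which
however is not equivariant. Averaging `cone s f` over `s ∈ G/ℋ` with the invariant mean restores
equivariance. Since the cochains take values in a dual space, a bounded family of functionals can
be averaged pointwise on `W`, and this average is linear, so it commutes with `δ`. -/

open scoped ENNReal

section Cone

variable {S : Type*} {V : Type*} [AddCommGroup V] [Module ℝ V]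

def cone {n : ℕ} (a : S) (f : (Fin (n + 2) → S) → V) : (Fin (n + 1) → S) → V :=
  fun x => f (Fin.cons a x)

theorem delta_cone_add_delta_cons {n : ℕ} (a : S) (f : (Fin (n + 2) → S) → V)
    (x : Fin (n + 2) → S) :
    delta n (cone a f) x + delta (n + 1) f (Fin.cons a x) = f x := by
  have hzero :
      (fun j => (Fin.cons a x : Fin (n + 3) → S) ((0 : Fin (n + 3)).succAbove j)) = x := by
    funext j
    rw [Fin.zero_succAbove, Fin.cons_succ]
  have hsucc : ∀ k : Fin (n + 2),
      (fun j => (Fin.cons a x : Fin (n + 3) → S) (k.succ.succAbove j))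
        = Fin.cons a (fun j => x (k.succAbove j)) := by
    intro k
    funext j
    cases j using Fin.cases with
    | zero => rw [Fin.succ_succAbove_zero]; rfl
    | succ i => rw [Fin.succ_succAbove_succ, Fin.cons_succ, Fin.cons_succ]
  simp only [delta, cone, Fin.sum_univ_succ (n := n + 2), hzero, hsucc, Fin.val_zero, pow_zero,
    one_smul, Fin.val_succ, pow_succ, mul_neg_one, neg_smul, Finset.sum_neg_distrib]
  abel

theorem delta_cone_of_delta_eq_zero {n : ℕ} (a : S) {f : (Fin (n + 2) → S) → V}
    (hf : delta (n + 1) f = 0) : delta n (cone a f) = f := by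
  funext x
  simpa [hf] using delta_cone_add_delta_cons a f x

theorem delta_comp_linearMap {V' F : Type*} [AddCommGroup V'] [Module ℝ V'] [FunLike F V V']
    [LinearMapClass F ℝ V V'] (L : F) (n : ℕ) (f : (Fin (n + 1) → S) → V) :
    delta n (fun x => L (f x)) = fun x => L (delta n f x) := by
  funext x
  simp only [delta, map_sum, map_smul]

end Cone

section Average

variable {S : Type v}

structure IsMean (μ : Linf S →ₗ[ℝ] ℝ) : Prop where
  map_one : μ (constLinf S 1) = 1
  nonneg : ∀ f : Linf S, (∀ s, 0 ≤ (f : S → ℝ) s) → 0 ≤ μ f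

namespace IsMean

variable {μ : Linf S →ₗ[ℝ] ℝ}

theorem map_const (hμ : IsMean μ) (r : ℝ) : μ (constLinf S r) = r := by
  have : constLinf S r = r • constLinf S 1 := by
    ext s
    simp [constLinf]
  rw [this, map_smul, hμ.map_one, smul_eq_mul, mul_one]

theorem mono (hμ : IsMean μ) {f g : Linf S} (h : ∀ s, (f : S → ℝ) s ≤ (g : S → ℝ) s) :
    μ f ≤ μ g := by
  have := hμ.nonneg (g - f) fun s => by simpa using h s
  rwa [map_sub, sub_nonneg] at this

theorem abs_le (hμ : IsMean μ) {f : Linf S} {C : ℝ} (hC : ∀ s, |(f : S → ℝ) s| ≤ C) :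
    |μ f| ≤ C := by
  have hf (s : S) := _root_.abs_le.1 (hC s)
  rw [_root_.abs_le]
  constructor
  · simpa [hμ.map_const] using hμ.mono (f := constLinf S (-C)) fun s => (hf s).1
  · simpa [hμ.map_const] using hμ.mono (g := constLinf S C) fun s => (hf s).2

end IsMean

variable {W : Type w} [NormedAddCommGroup W] [NormedSpace ℝ W]

theorem abs_apply_apply_le (φ : lp (fun _ : S => W →L[ℝ] ℝ) ∞) (w : W) (s : S) :
    |φ s w| ≤ ‖φ‖ * ‖w‖ := by
  rw [← Real.norm_eq_abs]
  exact ((φ s).le_opNorm w).trans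
    (mul_le_mul_of_nonneg_right (lp.norm_apply_le_norm ENNReal.top_ne_zero φ s) (norm_nonneg w))

noncomputable def evalLinf : lp (fun _ : S => W →L[ℝ] ℝ) ∞ →ₗ[ℝ] W →ₗ[ℝ] Linf S :=
  LinearMap.mk₂ ℝ
    (fun φ w => ⟨fun s => φ s w, ‖φ‖ * ‖w‖, abs_apply_apply_le φ w⟩)
    (fun _ _ _ => by ext; simp)
    (fun _ _ _ => by ext; simp)
    (fun _ _ _ => by ext; simp)
    (fun _ _ _ => by ext; simp)

theorem evalLinf_apply (φ : lp (fun _ : S => W →L[ℝ] ℝ) ∞) (w : W) (s : S) :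
    (evalLinf φ w : S → ℝ) s = φ s w := rfl

noncomputable def dualAverage {μ : Linf S →ₗ[ℝ] ℝ} (hμ : IsMean μ) :
    lp (fun _ : S => W →L[ℝ] ℝ) ∞ →L[ℝ] W →L[ℝ] ℝ :=
  LinearMap.mkContinuous₂ (evalLinf.compr₂ μ) 1 fun φ w => by
    rw [one_mul, Real.norm_eq_abs]
    exact hμ.abs_le (abs_apply_apply_le φ w)

variable {μ : Linf S →ₗ[ℝ] ℝ} (hμ : IsMean μ)

theorem dualAverage_apply (φ : lp (fun _ : S => W →L[ℝ] ℝ) ∞) (w : W) :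
    dualAverage hμ φ w = μ (evalLinf φ w) := rfl

theorem norm_dualAverage_le (φ : lp (fun _ : S => W →L[ℝ] ℝ) ∞) :
    ‖dualAverage hμ φ‖ ≤ ‖φ‖ := by
  have h : ‖dualAverage hμ (W := W)‖ ≤ 1 := LinearMap.mkContinuous₂_norm_le _ zero_le_one _
  simpa using (dualAverage hμ).le_of_opNorm_le h φ

theorem dualAverage_of_forall_eq {φ : lp (fun _ : S => W →L[ℝ] ℝ) ∞} {ψ : W →L[ℝ] ℝ}
    (h : ∀ s, φ s = ψ) : dualAverage hμ φ = ψ := by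
  ext w
  have : evalLinf φ w = constLinf S (ψ w) := by
    ext s
    simp [evalLinf_apply, h, constLinf]
  rw [dualAverage_apply, this, hμ.map_const]

theorem dualAverage_eq_comp {σ : S → S} (hσ : ∀ f, μ (compL σ f) = μ f) (T : W →L[ℝ] W)
    {φ ψ : lp (fun _ : S => W →L[ℝ] ℝ) ∞} (h : ∀ s, ψ s = (φ (σ s)).comp T) :
    dualAverage hμ ψ = (dualAverage hμ φ).comp T := by
  ext w
  have : evalLinf ψ w = compL σ (evalLinf φ (T w)) := by
    ext s
    simp [evalLinf_apply, h, compL]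
  rw [dualAverage_apply, this, hσ]
  rfl

end Average

def Cos.toFamGen (ℋ : Set (Subgroup G)) (x : Cos G ℋ) : Cos G (famGen ℋ) :=
  ⟨⟨x.1, Or.inr ⟨x.1, x.1.2, 1, fun y hy => by simpa using hy⟩⟩, x.2⟩

/-- Theorem A, (i) ⇒ (ii).  If `G` is amenable relative to a set
`ℋ` of subgroups, then for every normed `ℝG`-module `W`, every `n ≥ 1` and every
bounded `G`-equivariant cocycle `f : (G/F⟨ℋ⟩)^{n+1} → W^#` there is a bounded
`G`-equivariant `b : (G/F⟨ℋ⟩)^n → W^#` with `δb = f`; that is,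
`H^n_{F⟨ℋ⟩,b}(G; W^#) = 0` for every dual normed `ℝG`-module and all `n ≥ 1`. -/
theorem relatively_amenable_implies_vanishing (G : Type u) [Group G]
    (ℋ : Set (Subgroup G))
    (hamen : InvariantMean G (Cos G ℋ))
    (W : Type v) [NormedAddCommGroup W] [NormedSpace ℝ W] [DistribMulAction G W]
    [SMulCommClass G ℝ W] (hW : ∀ (g : G) (w : W), ‖g • w‖ = ‖w‖)
    (m : ℕ) (f : (Fin (m + 2) → Cos G (famGen ℋ)) → (W →L[ℝ] ℝ))
    (hfbdd : Bdd f)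
    (hfequiv : ∀ (g : G) (x : Fin (m + 2) → Cos G (famGen ℋ)),
      f (fun j => g • x j) = (f x).comp (smulCLM hW g⁻¹))
    (hfcocycle : delta (m + 1) f = 0) :
    ∃ b : (Fin (m + 1) → Cos G (famGen ℋ)) → (W →L[ℝ] ℝ),
      Bdd b ∧
      (∀ (g : G) (x : Fin (m + 1) → Cos G (famGen ℋ)),
        b (fun j => g • x j) = (b x).comp (smulCLM hW g⁻¹)) ∧
      delta m b = f := by
  obtain ⟨μ, hμ_one, hμ_nonneg, hμ_inv⟩ := hamen
  have hμ : IsMean μ := ⟨hμ_one, hμ_nonneg⟩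
  obtain ⟨C, hC⟩ := hfbdd
  let cones (x : Fin (m + 1) → Cos G (famGen ℋ)) : lp (fun _ : Cos G ℋ => W →L[ℝ] ℝ) ∞ :=
    ⟨fun s => cone (Cos.toFamGen ℋ s) f x, memℓp_infty ⟨C, by rintro _ ⟨s, rfl⟩; exact hC _⟩⟩
  refine ⟨fun x => dualAverage hμ (cones x), ⟨max C 0, fun x => ?_⟩, fun g x => ?_, ?_⟩
  · exact (norm_dualAverage_le hμ _).trans
      (lp.norm_le_of_forall_le (le_max_right _ _) fun s => (hC _).trans (le_max_left _ _))
  · refine dualAverage_eq_comp hμ (hμ_inv g) _ fun s => ?_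
    show f (Fin.cons (Cos.toFamGen ℋ s) (g • x))
      = (f (Fin.cons (Cos.toFamGen ℋ (g⁻¹ • s)) x)).comp (smulCLM hW g⁻¹)
    rw [← hfequiv]
    congr 1
    funext j
    cases j using Fin.cases with
    | zero => exact congrArg (Cos.toFamGen ℋ) (smul_inv_smul g s).symm
    | succ => rfl
  · rw [delta_comp_linearMap (dualAverage hμ)]
    funext x
    refine dualAverage_of_forall_eq hμ fun s => ?_
    have hcoord := congrFun (delta_comp_linearMap (lp.evalₗ (𝕜 := ℝ) _ ∞ s) m cones) x
    exact hcoord.symm.trans (congrFun (delta_cone_of_delta_eq_zero _ hfcocycle) x)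

end RelBdd
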